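/- In the first-order Gaussian ISI channel with BPSK mapping (bit b ↦ 1−2b), where P(y_i | x_{i-1}, x_i) is the Gaussian density N(h₀(1−2x_i) + h₁(1−2x_{i-1}), σ²) evaluated at y_i, the pairwise correction term satisfies Rel({i,i+1}) − Rel({i}) − Rel({i+1}) = (4 h₀ h₁ / σ²) · (2·𝟙[x*_i = x*_{i+1}] − 1), for any 1 ≤ i ≤ N−1 with i+1 ≤ N−1 or appropriate boundary handling; in particular the correction term does not depend on the received values y. -/

import Mathlib

/-!
The pairwise correction is the mixed second difference of `Λ` in the bits `i` and `i + 1`.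
Each summand of `Λ` depends on two adjacent bits only, so every summand except the one at
`i + 1` is invariant under one of the two flips and drops out. In the remaining Gaussian
log-likelihood, the mixed difference kills every part of the squared residual except the cross
term `2 h₀ h₁ w_i w_{i+1}`.
-/

/-- Gaussian density with mean `μ` and variance `σ²`, evaluated at `y`. -/
noncomputable def gpdf (σ μ y : ℝ) : ℝ :=
  (1 / Real.sqrt (2 * Real.pi * σ ^ 2)) * Real.exp (-(y - μ) ^ 2 / (2 * σ ^ 2))

/-- BPSK mapping of a bit: `b ↦ 1 - 2b`. -/
def bval (b : Bool) : ℝ := if b then 1 else 0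

/-- Flip the bits of `x` at the positions in `S`. -/
def flipSeq (S : Finset ℕ) (x : ℕ → Bool) : ℕ → Bool :=
  fun i => if i ∈ S then !(x i) else x i

/-- `ln P(y_i | x_{i-1}, x_i)` for the first-order Gaussian ISI channel with BPSK. -/
noncomputable def gaussLL (h0 h1 σ : ℝ) (y : ℕ → ℝ) (i : ℕ) (bprev b : Bool) : ℝ :=
  Real.log (gpdf σ (h0 * (1 - 2 * bval b) + h1 * (1 - 2 * bval bprev)) (y i))

/-- First-order weight function for the Gaussian ISI channel. -/
noncomputable def Lam1 (N : ℕ) (h0 h1 σ : ℝ) (y : ℕ → ℝ) (x : ℕ → Bool) : ℝ :=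
  ∑ i ∈ Finset.Icc 1 N, gaussLL h0 h1 σ y i (x (i - 1)) (x i)

/-- Sequence reliability. -/
noncomputable def Rel1 (N : ℕ) (h0 h1 σ : ℝ) (y : ℕ → ℝ) (xs : ℕ → Bool)
    (S : Finset ℕ) : ℝ :=
  Lam1 N h0 h1 σ y xs - Lam1 N h0 h1 σ y (flipSeq S xs)

def mixedDiff {M : Type*} [AddCommGroup M] (F : (ℕ → Bool) → M) (i k : ℕ) (x : ℕ → Bool) : M :=
  F (flipSeq {i} x) + F (flipSeq {k} x) - F x - F (flipSeq {i, k} x)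

lemma flipSeq_singleton_apply_of_ne {i m : ℕ} (h : m ≠ i) (x : ℕ → Bool) :
    flipSeq {i} x m = x m := by
  simp [flipSeq, h]

lemma flipSeq_singleton_apply_self (i : ℕ) (x : ℕ → Bool) : flipSeq {i} x i = !x i := by
  simp [flipSeq]

lemma flipSeq_pair {i k : ℕ} (hik : i ≠ k) (x : ℕ → Bool) :
    flipSeq {i, k} x = flipSeq {i} (flipSeq {k} x) := by
  funext m
  by_cases hi : m = i
  · subst hi; simp [flipSeq, hik]
  · by_cases hk : m = k
    · subst hk; simp [flipSeq, hi]
    · simp [flipSeq, hi, hk]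

section mixedDiff

variable {M : Type*} [AddCommGroup M]

lemma mixedDiff_comm (F : (ℕ → Bool) → M) (i k : ℕ) (x : ℕ → Bool) :
    mixedDiff F i k x = mixedDiff F k i x := by
  rw [mixedDiff, mixedDiff, Finset.pair_comm]
  abel

lemma mixedDiff_sum {ι : Type*} (s : Finset ι) (F : ι → (ℕ → Bool) → M) (i k : ℕ)
    (x : ℕ → Bool) :
    mixedDiff (fun x => ∑ j ∈ s, F j x) i k x = ∑ j ∈ s, mixedDiff (F j) i k x := by
  simp only [mixedDiff, Finset.sum_add_distrib, Finset.sum_sub_distrib]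

lemma mixedDiff_eq_zero_of_flip_invariant {F : (ℕ → Bool) → M} {i k : ℕ} (hik : i ≠ k)
    (hF : ∀ x, F (flipSeq {i} x) = F x) (x : ℕ → Bool) : mixedDiff F i k x = 0 := by
  rw [mixedDiff, flipSeq_pair hik, hF, hF]
  abel

lemma mixedDiff_local_eq_zero (g : Bool → Bool → M)
    {i j : ℕ} (hj : 1 ≤ j) (hji : j ≠ i + 1) (x : ℕ → Bool) :
    mixedDiff (fun x => g (x (j - 1)) (x j)) i (i + 1) x = 0 := by
  by_cases hi : i = j - 1 ∨ i = j
  · rw [mixedDiff_comm]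
    refine mixedDiff_eq_zero_of_flip_invariant (by omega) (fun x => ?_) x
    rw [flipSeq_singleton_apply_of_ne (by omega), flipSeq_singleton_apply_of_ne (by omega)]
  · refine mixedDiff_eq_zero_of_flip_invariant (by omega) (fun x => ?_) x
    rw [flipSeq_singleton_apply_of_ne (by omega), flipSeq_singleton_apply_of_ne (by omega)]

lemma mixedDiff_local_self (g : Bool → Bool → M) (i : ℕ)
    (x : ℕ → Bool) :
    mixedDiff (fun x => g (x (i + 1 - 1)) (x (i + 1))) i (i + 1) x =
      g (!x i) (x (i + 1)) + g (x i) (!x (i + 1)) - g (x i) (x (i + 1)) -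
        g (!x i) (!x (i + 1)) := by
  simp only [mixedDiff, Nat.add_sub_cancel, flipSeq_pair (Nat.ne_add_one i),
    flipSeq_singleton_apply_self, flipSeq_singleton_apply_of_ne (Nat.ne_add_one i),
    flipSeq_singleton_apply_of_ne (Nat.ne_add_one i).symm]

end mixedDiff

lemma Rel1_pair_sub (N : ℕ) (h0 h1 σ : ℝ) (y : ℕ → ℝ) (xs : ℕ → Bool) (i k : ℕ) :
    Rel1 N h0 h1 σ y xs {i, k} - Rel1 N h0 h1 σ y xs {i} - Rel1 N h0 h1 σ y xs {k} =
      mixedDiff (Lam1 N h0 h1 σ y) i k xs := by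
  simp only [Rel1, mixedDiff]
  ring

lemma gaussLL_eq {σ : ℝ} (hσ : σ ≠ 0) (h0 h1 : ℝ) (y : ℕ → ℝ) (i : ℕ) (p c : Bool) :
    gaussLL h0 h1 σ y i p c = Real.log (1 / Real.sqrt (2 * Real.pi * σ ^ 2))
      - (y i - (h0 * (1 - 2 * bval c) + h1 * (1 - 2 * bval p))) ^ 2 / (2 * σ ^ 2) := by
  have hsqrt : 0 < Real.sqrt (2 * Real.pi * σ ^ 2) := by positivity
  rw [gaussLL, gpdf, Real.log_mul (by positivity) (Real.exp_ne_zero _), Real.log_exp]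
  ring

lemma gaussLL_mixed {σ : ℝ} (hσ : σ ≠ 0) (h0 h1 : ℝ) (y : ℕ → ℝ) (i : ℕ) (a b : Bool) :
    gaussLL h0 h1 σ y i (!a) b + gaussLL h0 h1 σ y i a (!b) - gaussLL h0 h1 σ y i a b -
        gaussLL h0 h1 σ y i (!a) (!b) =
      4 * h0 * h1 / σ ^ 2 * (2 * (if a = b then (1 : ℝ) else 0) - 1) := by
  simp only [gaussLL_eq hσ]
  cases a <;> cases b <;> simp [bval] <;> field_simp <;> ring

theorem pairwise_correction_general (N i : ℕ) (h0 h1 σ : ℝ) (hσ : 0 < σ)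
    (y : ℕ → ℝ) (xs : ℕ → Bool) (hiN : i + 1 ≤ N) :
    Rel1 N h0 h1 σ y xs {i, i + 1} - Rel1 N h0 h1 σ y xs {i} -
        Rel1 N h0 h1 σ y xs {i + 1} =
      4 * h0 * h1 / σ ^ 2 * (2 * (if xs i = xs (i + 1) then (1 : ℝ) else 0) - 1) := by
  rw [Rel1_pair_sub]
  unfold Lam1
  rw [mixedDiff_sum,
    Finset.sum_eq_single_of_mem (i + 1) (Finset.mem_Icc.mpr ⟨by omega, hiN⟩)]
  · rw [mixedDiff_local_self, gaussLL_mixed hσ.ne']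
  · intro j hj hji
    exact mixedDiff_local_eq_zero _ (Finset.mem_Icc.mp hj).1 hji xs

/-- Lemma 3: in the first-order Gaussian ISI channel, the pairwise correction term
equals `(4 h₀ h₁ / σ²)(2·𝟙[x*_i = x*_{i+1}] − 1)`, independent of `y`. -/
theorem pairwise_correction (N i : ℕ) (h0 h1 σ : ℝ) (hσ : 0 < σ)
    (y : ℕ → ℝ) (xs : ℕ → Bool) (hi : 1 ≤ i) (hiN : i + 1 ≤ N) :
    Rel1 N h0 h1 σ y xs {i, i + 1} - Rel1 N h0 h1 σ y xs {i} -
        Rel1 N h0 h1 σ y xs {i + 1} =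
      4 * h0 * h1 / σ ^ 2 * (2 * (if xs i = xs (i + 1) then (1 : ℝ) else 0) - 1) :=
  pairwise_correction_general N i h0 h1 σ hσ y xs hiN
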